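/- Suppose the grade m is even, m ≥ 2, and assume the expectation Gram matrix is positive semidefinite at grade m. Then for every real ε, with Q_ε := ½(id−S) + ε·J^{⋆m}, one has ‖(id−E)∘Q_ε‖² ≥ ‖(id−E)∘Q_0‖², where the inner product is taken over the words of length m; that is, among all such perturbations the unperturbed sinhlog integrator (ε = 0) minimizes the leading-order mean-square error. -/

import Mathlib

open Finsupp

/-- Words over the alphabet `A = {0,1,…,d}`. -/
abbrev Word (d : ℕ) : Type := List (Fin (d+1))

/-- The free real vector space with basis the set of all words. -/
abbrev KA (d : ℕ) : Type := Word d →₀ ℝ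

/-- Shuffle product of two words, as an element of `KA d`. -/
noncomputable def shuffleWord (d : ℕ) : Word d → Word d → KA d
  | [], v => Finsupp.single v 1
  | a :: u, [] => Finsupp.single (a :: u) 1
  | a :: u, b :: v =>
      Finsupp.mapDomain (List.cons a) (shuffleWord d u (b :: v)) +
      Finsupp.mapDomain (List.cons b) (shuffleWord d (a :: u) v)
  termination_by u v => u.length + v.length

/-- Bilinear extension of the shuffle product to `KA d`. -/
noncomputable def sh (d : ℕ) (x y : KA d) : KA d :=
  x.sum fun u cu => y.sum fun v cv => (cu * cv) • shuffleWord d u v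

/-- Admissible words: concatenations of blocks each of which is the single
letter `0` or a pair `aa` with `a ≠ 0`. -/
inductive Admissible (d : ℕ) : Word d → Prop
  | nil : Admissible d []
  | zero {w : Word d} : Admissible d w → Admissible d (0 :: w)
  | pair {w : Word d} (a : Fin (d+1)) : a ≠ 0 → Admissible d w →
      Admissible d (a :: a :: w)

/-- Number of `0` letters. -/
def zc (d : ℕ) (w : Word d) : ℕ := w.count 0

/-- Half the number of nonzero letters. -/
def dc (d : ℕ) (w : Word d) : ℕ := (w.length - w.count 0) / 2

def nc (d : ℕ) (w : Word d) : ℕ := zc d w + dc d w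

open Classical in
/-- The expectation map on words. -/
noncomputable def Ebar (d : ℕ) (t : ℝ) (w : Word d) : ℝ :=
  if Admissible d w then t ^ nc d w / (2 ^ dc d w * Nat.factorial (nc d w)) else 0

/-- Linear extension of the expectation map to `KA d`. -/
noncomputable def EbarL (d : ℕ) (t : ℝ) (x : KA d) : ℝ :=
  x.sum fun w c => c * Ebar d t w

/-- The linear endomorphism of `KA d` determined by values on basis words. -/
noncomputable def wordLift (d : ℕ) (f : Word d → KA d) : KA d →ₗ[ℝ] KA d :=
  Finsupp.lsum ℝ fun w => LinearMap.toSpanSingleton ℝ (KA d) (f w)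

/-- The identity endomorphism `id`. -/
noncomputable def idE (d : ℕ) : KA d →ₗ[ℝ] KA d := LinearMap.id

/-- The reversal endomorphism `|S|`. -/
noncomputable def revE (d : ℕ) : KA d →ₗ[ℝ] KA d :=
  wordLift d fun w => Finsupp.single w.reverse 1

/-- The antipode `S`. -/
noncomputable def Sa (d : ℕ) : KA d →ₗ[ℝ] KA d :=
  wordLift d fun w => Finsupp.single w.reverse ((-1 : ℝ) ^ w.length)

/-- The convolution unit `ν`. -/
noncomputable def nuE (d : ℕ) : KA d →ₗ[ℝ] KA d :=
  wordLift d fun w => if w = [] then Finsupp.single ([] : Word d) 1 else 0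

/-- The expectation endomorphism `E`. -/
noncomputable def EE (d : ℕ) (t : ℝ) : KA d →ₗ[ℝ] KA d :=
  wordLift d fun w => Finsupp.single ([] : Word d) (Ebar d t w)

/-- The convolution product `X ⋆ Y`. -/
noncomputable def conv (d : ℕ) (X Y : KA d →ₗ[ℝ] KA d) : KA d →ₗ[ℝ] KA d :=
  wordLift d fun w => ∑ k ∈ Finset.range (w.length + 1),
    sh d (X (Finsupp.single (w.take k) 1)) (Y (Finsupp.single (w.drop k) 1))

/-- Convolution powers, `X^{⋆0} = ν`. -/
noncomputable def convPow (d : ℕ) (X : KA d →ₗ[ℝ] KA d) : ℕ → (KA d →ₗ[ℝ] KA d)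
  | 0 => nuE d
  | k + 1 => conv d X (convPow d X k)

/-- The inner product `⟨X,Y⟩` of endomorphisms, taken over the words of
length `n`, relative to the family of vectors `Vf`. -/
noncomputable def ip (d : ℕ) (t : ℝ) {H : Type*} [NormedAddCommGroup H]
    [InnerProductSpace ℝ H] (Vf : Word d → H) (n : ℕ)
    (X Y : KA d →ₗ[ℝ] KA d) : ℝ :=
  ∑ u : Fin n → Fin (d+1), ∑ v : Fin n → Fin (d+1),
    EbarL d t (sh d (X (Finsupp.single (List.ofFn u) 1))
                    (Y (Finsupp.single (List.ofFn v) 1))) *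
      (inner ℝ (Vf (List.ofFn u)) (Vf (List.ofFn v)) : ℝ)

/-- Positive semidefiniteness of the expectation Gram matrix at grade `n`:
indexed by the words of length `n` together with the empty word. -/
def gramPSD (d n : ℕ) (t : ℝ) : Prop :=
  ∀ c : Option (Fin n → Fin (d+1)) → ℝ,
    0 ≤ ∑ x : Option (Fin n → Fin (d+1)), ∑ y : Option (Fin n → Fin (d+1)),
      c x * c y *
        EbarL d t (shuffleWord d (x.elim ([] : Word d) List.ofFn)
                                 (y.elim ([] : Word d) List.ofFn))

/-- The grade-`m` pre-remainder `Q_ε = ½(id−S) + ε·J^{⋆m}` of the perturbed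
sinhlog integrator. -/
noncomputable def Qeps (d m : ℕ) (ε : ℝ) : KA d →ₗ[ℝ] KA d :=
  (1 / 2 : ℝ) • (idE d - Sa d) + ε • convPow d (idE d - nuE d) m

/-!
Write `X = (id − E) ∘ Q₀` and `Z = (id − E) ∘ J^{⋆m}`, so that `(id − E) ∘ Q_ε = X + ε Z` and
`‖X + ε Z‖² = ‖X‖² + ε (⟨X, Z⟩ + ⟨Z, X⟩) + ε² ‖Z‖²`.
For a word `u` of even length `m` we have `S u = rev u` and `Ē (rev u) = Ē u`, hence
`X u = ½ (u − rev u)`, while `J^{⋆m} v = v₁ ⧢ ⋯ ⧢ v_m`, so `Z v` is reversal invariant.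
Reversal is a shuffle automorphism preserving `Ē`, so both cross terms vanish.
Finally `Z v` lies in the span of `𝟏` and the words of length `m`; if `A` is the matrix of its
coefficients and `G` the expectation Gram matrix, then `‖Z‖² = ∑ (A G Aᵀ)_{uv} ⟪V_u, V_v⟫`, which
is nonnegative by the Schur product theorem applied to `A G Aᵀ` and the Gram matrix of the `V_u`.
-/

lemma Finsupp.eq_sum_single_of_support_subset_range {ι α R : Type*} [Fintype ι] [Semiring R]
    {f : ι → α} (hf : Function.Injective f) {p : α →₀ R} (hp : ↑p.support ⊆ Set.range f) :
    p = ∑ i, p (f i) • single (f i) 1 := by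
  classical
  ext w
  rw [finsetSum_apply]
  by_cases hw : w ∈ Set.range f
  · obtain ⟨i, rfl⟩ := hw
    rw [Finset.sum_eq_single i (fun j _ hji => by simp [hf.ne hji]) (by simp)]
    simp
  · have hpw : p w = 0 := notMem_support_iff.mp fun h => hw (hp h)
    rw [hpw, Finset.sum_eq_zero fun i _ => by simp [show f i ≠ w from fun h => hw ⟨i, h⟩]]

lemma sum_mul_inner_nonneg_of_posSemidef {ι H : Type*} [Fintype ι] [NormedAddCommGroup H]
    [InnerProductSpace ℝ H] {G : Matrix ι ι ℝ} (hG : G.PosSemidef) (W : ι → H) :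
    0 ≤ ∑ i, ∑ j, G i j * inner ℝ (W i) (W j) := by
  have h := (hG.hadamard (Matrix.posSemidef_gram ℝ W)).dotProduct_mulVec_nonneg 1
  simpa [dotProduct, Matrix.mulVec, Matrix.gram_apply, Finset.mul_sum] using h

section

variable {d : ℕ}

@[simp]
lemma shuffleWord_nil_left (v : Word d) : shuffleWord d [] v = single v 1 := by
  cases v <;> simp [shuffleWord]

@[simp]
lemma shuffleWord_nil_right (u : Word d) : shuffleWord d u [] = single u 1 := by
  cases u <;> simp [shuffleWord]

lemma shuffleWord_cons_cons (a b : Fin (d+1)) (u v : Word d) :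
    shuffleWord d (a :: u) (b :: v) =
      mapDomain (List.cons a) (shuffleWord d u (b :: v)) +
      mapDomain (List.cons b) (shuffleWord d (a :: u) v) := by
  rw [shuffleWord]

lemma shuffleWord_comm (u v : Word d) : shuffleWord d u v = shuffleWord d v u := by
  induction u generalizing v with
  | nil => simp
  | cons a u ihu =>
    induction v with
    | nil => simp
    | cons b v ihv => rw [shuffleWord_cons_cons, shuffleWord_cons_cons, ihu, ihv, add_comm]

lemma mapDomain_cons_mapDomain_append (a b : Fin (d+1)) (x : KA d) :
    mapDomain (List.cons a) (mapDomain (· ++ [b]) x) =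
      mapDomain (· ++ [b]) (mapDomain (List.cons a) x) := by
  rw [← mapDomain_comp, ← mapDomain_comp]
  rfl

lemma shuffleWord_append_singleton (a b : Fin (d+1)) (u v : Word d) :
    shuffleWord d (u ++ [a]) (v ++ [b]) =
      mapDomain (· ++ [a]) (shuffleWord d u (v ++ [b])) +
      mapDomain (· ++ [b]) (shuffleWord d (u ++ [a]) v) := by
  induction u generalizing v with
  | nil =>
    induction v with
    | nil =>
      simp only [List.nil_append, shuffleWord_nil_left, shuffleWord_nil_right,
        shuffleWord_cons_cons, mapDomain_single, List.cons_append]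
      abel
    | cons c v ihv =>
      simp only [List.nil_append, List.cons_append] at ihv ⊢
      rw [shuffleWord_cons_cons, ihv, shuffleWord_cons_cons]
      simp only [shuffleWord_nil_left, mapDomain_add, mapDomain_single,
        mapDomain_cons_mapDomain_append, List.cons_append]
      abel
  | cons c u ihu =>
    induction v with
    | nil =>
      have ihu_nil := ihu []
      simp only [List.nil_append, List.cons_append] at ihu_nil ⊢
      rw [shuffleWord_cons_cons, ihu_nil, shuffleWord_cons_cons]
      simp only [shuffleWord_nil_right, mapDomain_add, mapDomain_single,
        mapDomain_cons_mapDomain_append, List.cons_append]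
      abel
    | cons e v ihv =>
      have ihu_cons := ihu (e :: v)
      simp only [List.cons_append] at ihu_cons ihv ⊢
      rw [shuffleWord_cons_cons, ihu_cons, ihv, shuffleWord_cons_cons c e u,
        shuffleWord_cons_cons c e (u ++ [a])]
      simp only [mapDomain_add, mapDomain_cons_mapDomain_append]
      abel

lemma mapDomain_reverse_shuffleWord (u v : Word d) :
    mapDomain List.reverse (shuffleWord d u v) = shuffleWord d u.reverse v.reverse := by
  have reverse_cons (a : Fin (d+1)) (x : KA d) :
      mapDomain List.reverse (mapDomain (List.cons a) x) =
        mapDomain (· ++ [a]) (mapDomain List.reverse x) := by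
    rw [← mapDomain_comp, ← mapDomain_comp]
    congr 1
    funext l
    simp
  induction u generalizing v with
  | nil => simp
  | cons a u ihu =>
    induction v with
    | nil => simp
    | cons b v ihv =>
      rw [shuffleWord_cons_cons, mapDomain_add, reverse_cons, reverse_cons, ihu, ihv,
        List.reverse_cons, List.reverse_cons, shuffleWord_append_singleton]

lemma length_of_mem_support_shuffleWord {u v w : Word d}
    (hw : w ∈ (shuffleWord d u v).support) : w.length = u.length + v.length := by
  induction u generalizing v w with
  | nil => simp_all
  | cons a u ihu =>
    induction v generalizing w with
    | nil => simp_all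
    | cons b v ihv =>
      rw [shuffleWord_cons_cons] at hw
      rcases Finset.mem_union.mp (support_add hw) with h | h <;>
      obtain ⟨w', hw', rfl⟩ := Finset.mem_image.mp (mapDomain_support h)
      · simp [ihu hw']
        omega
      · simp [ihv hw']
        omega

noncomputable def shBilin (d : ℕ) : KA d →ₗ[ℝ] KA d →ₗ[ℝ] KA d :=
  lsum ℝ fun u => LinearMap.toSpanSingleton ℝ (KA d →ₗ[ℝ] KA d)
    (lsum ℝ fun v => LinearMap.toSpanSingleton ℝ (KA d) (shuffleWord d u v))

lemma sh_eq_shBilin (x y : KA d) : sh d x y = shBilin d x y := by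
  simp only [sh, shBilin, lsum_apply, LinearMap.coe_sum, Finset.sum_apply, sum,
    LinearMap.toSpanSingleton_apply, LinearMap.smul_apply, Finset.smul_sum, smul_smul]

@[simp]
lemma shBilin_single_single (u v : Word d) (a b : ℝ) :
    shBilin d (single u a) (single v b) = (a * b) • shuffleWord d u v := by
  simp [shBilin, smul_smul]

lemma sh_comm (x y : KA d) : sh d x y = sh d y x := by
  rw [sh, sh, Finsupp.sum_comm]
  refine Finsupp.sum_congr fun v _ => Finsupp.sum_congr fun u _ => ?_
  rw [mul_comm, shuffleWord_comm]

lemma EbarL_eq_linearCombination (t : ℝ) (x : KA d) :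
    EbarL d t x = linearCombination ℝ (Ebar d t) x := rfl

@[simp]
lemma EbarL_zero (t : ℝ) : EbarL d t 0 = 0 := by
  simp [EbarL_eq_linearCombination]

@[simp]
lemma EbarL_add (t : ℝ) (x y : KA d) : EbarL d t (x + y) = EbarL d t x + EbarL d t y := by
  simp [EbarL_eq_linearCombination]

@[simp]
lemma EbarL_sub (t : ℝ) (x y : KA d) : EbarL d t (x - y) = EbarL d t x - EbarL d t y := by
  simp [EbarL_eq_linearCombination]

@[simp]
lemma EbarL_smul (t c : ℝ) (x : KA d) : EbarL d t (c • x) = c * EbarL d t x := by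
  simp [EbarL_eq_linearCombination]

@[simp]
lemma EbarL_single (t : ℝ) (w : Word d) (c : ℝ) : EbarL d t (single w c) = c * Ebar d t w := by
  simp [EbarL_eq_linearCombination]

lemma Admissible.append_zero {w : Word d} (h : Admissible d w) : Admissible d (w ++ [0]) := by
  induction h with
  | nil => exact .zero .nil
  | zero _ ih => exact .zero ih
  | pair b hb _ ih => exact .pair b hb ih

lemma Admissible.append_pair {w : Word d} {a : Fin (d+1)} (ha : a ≠ 0) (h : Admissible d w) :
    Admissible d (w ++ [a, a]) := by
  induction h with
  | nil => exact .pair a ha .nil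
  | zero _ ih => exact .zero ih
  | pair b hb _ ih => exact .pair b hb ih

lemma Admissible.reverse {w : Word d} (h : Admissible d w) : Admissible d w.reverse := by
  induction h with
  | nil => exact .nil
  | zero _ ih => simpa using ih.append_zero
  | pair a ha _ ih => simpa using ih.append_pair ha

lemma admissible_reverse_iff {w : Word d} : Admissible d w.reverse ↔ Admissible d w :=
  ⟨fun h => by simpa using h.reverse, Admissible.reverse⟩

lemma Ebar_reverse (t : ℝ) (w : Word d) : Ebar d t w.reverse = Ebar d t w := by
  simp only [Ebar, nc, zc, dc, List.count_reverse, List.length_reverse]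
  congr 1
  exact propext admissible_reverse_iff

lemma revE_eq_lmapDomain : revE d = lmapDomain ℝ ℝ List.reverse := by
  ext w
  simp [revE, wordLift]

lemma revE_apply (x : KA d) : revE d x = mapDomain List.reverse x := by
  rw [revE_eq_lmapDomain, lmapDomain_apply]

lemma EbarL_revE (t : ℝ) (x : KA d) : EbarL d t (revE d x) = EbarL d t x := by
  simp only [revE_apply, EbarL_eq_linearCombination, linearCombination_mapDomain]
  congr 2
  exact funext (Ebar_reverse t)

lemma revE_sh (x y : KA d) : revE d (sh d x y) = sh d (revE d x) (revE d y) := by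
  simp only [sh_eq_shBilin]
  suffices h : (shBilin d).compr₂ (revE d) = (shBilin d).compl₁₂ (revE d) (revE d) from
    LinearMap.congr_fun₂ h x y
  ext u v
  simp [revE_apply, mapDomain_reverse_shuffleWord]

@[simp]
lemma wordLift_single (f : Word d → KA d) (w : Word d) (c : ℝ) :
    wordLift d f (single w c) = c • f w := by
  rw [wordLift, lsum_single, LinearMap.toSpanSingleton_apply]

lemma Sa_single (w : Word d) :
    Sa d (single w 1) = single w.reverse ((-1 : ℝ) ^ w.length) := by
  simp [Sa]

lemma EE_apply (t : ℝ) (x : KA d) : EE d t x = single [] (EbarL d t x) := by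
  induction x using Finsupp.induction_linear with
  | zero => simp
  | add x y hx hy => simp [hx, hy]
  | single w c => simp [EE, smul_single]

lemma J_single_nil : (idE d - nuE d) (single [] 1) = 0 := by
  simp [idE, nuE]

lemma J_single_of_ne_nil {w : Word d} (hw : w ≠ []) :
    (idE d - nuE d) (single w 1) = single w 1 := by
  simp [idE, nuE, hw]

lemma convPow_succ_single (X : KA d →ₗ[ℝ] KA d) (k : ℕ) (w : Word d) :
    convPow d X (k + 1) (single w 1) = ∑ j ∈ Finset.range (w.length + 1),
      sh d (X (single (w.take j) 1)) (convPow d X k (single (w.drop j) 1)) := by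
  rw [convPow, conv, wordLift_single, one_smul]

noncomputable def shuffleLetters : Word d → KA d
  | [] => single [] 1
  | a :: w => sh d (single [a] 1) (shuffleLetters w)

lemma convPow_J_term_eq_zero {k : ℕ}
    (hk : ∀ v : Word d, v.length < k → convPow d (idE d - nuE d) k (single v 1) = 0)
    {w : Word d} {j : ℕ} (hj : j = 0 ∨ (w.drop j).length < k) :
    sh d ((idE d - nuE d) (single (w.take j) 1))
      (convPow d (idE d - nuE d) k (single (w.drop j) 1)) = 0 := by
  rcases hj with rfl | hj
  · rw [List.take_zero, J_single_nil, sh_eq_shBilin, map_zero, LinearMap.zero_apply]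
  · rw [hk _ hj, sh_eq_shBilin, map_zero]

lemma convPow_J_single_of_length_lt {k : ℕ} {w : Word d} (hw : w.length < k) :
    convPow d (idE d - nuE d) k (single w 1) = 0 := by
  induction k generalizing w with
  | zero => omega
  | succ k ih =>
    rw [convPow_succ_single]
    refine Finset.sum_eq_zero fun j hj => convPow_J_term_eq_zero (fun _ => ih) ?_
    rw [Finset.mem_range] at hj
    rw [List.length_drop]
    omega

lemma convPow_J_single_of_length_eq {w : Word d} :
    convPow d (idE d - nuE d) w.length (single w 1) = shuffleLetters w := by
  induction w with
  | nil => simp [convPow, shuffleLetters, nuE]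
  | cons a w ih =>
    rw [List.length_cons, convPow_succ_single, Finset.sum_eq_single 1]
    · rw [List.take_one, List.head?_cons, Option.toList_some, List.drop_one, List.tail_cons,
        J_single_of_ne_nil (List.cons_ne_nil a []), ih, shuffleLetters]
    · intro j hj hj1
      refine convPow_J_term_eq_zero (fun _ => convPow_J_single_of_length_lt) ?_
      simp only [Finset.mem_range, List.length_cons] at hj
      rw [List.length_drop, List.length_cons]
      omega
    · simp

lemma revE_shuffleLetters (w : Word d) : revE d (shuffleLetters w) = shuffleLetters w := by
  induction w with
  | nil => simp [shuffleLetters, revE_apply]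
  | cons a w ih => rw [shuffleLetters, revE_sh, ih, revE_apply (single _ _), mapDomain_single]; rfl

lemma length_of_mem_support_sh {x y : KA d} {p q : ℕ} (hx : ∀ u ∈ x.support, u.length = p)
    (hy : ∀ v ∈ y.support, v.length = q) {w : Word d} (hw : w ∈ (sh d x y).support) :
    w.length = p + q := by
  obtain ⟨u, hu, hw⟩ := Finset.mem_biUnion.mp (support_sum hw)
  obtain ⟨v, hv, hw⟩ := Finset.mem_biUnion.mp (support_sum hw)
  rw [length_of_mem_support_shuffleWord (support_smul hw), hx u hu, hy v hv]

lemma length_of_mem_support_shuffleLetters {w v : Word d}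
    (hv : v ∈ (shuffleLetters w).support) : v.length = w.length := by
  induction w generalizing v with
  | nil => simp_all [shuffleLetters]
  | cons a w ih =>
    rw [shuffleLetters] at hv
    have h_letter : ∀ u ∈ (single [a] (1 : ℝ)).support, u.length = 1 := fun u hu => by
      rw [Finset.mem_singleton.mp (support_single_subset hu), List.length_singleton]
    rw [length_of_mem_support_sh h_letter (fun _ => ih) hv, List.length_cons, add_comm]

lemma EbarL_sh_revE_left (t : ℝ) (x : KA d) {z : KA d} (hz : revE d z = z) :
    EbarL d t (sh d (revE d x) z) = EbarL d t (sh d x z) := by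
  rw [← hz, ← revE_sh, EbarL_revE, hz]

lemma EbarL_sh_sub_revE_left (t : ℝ) (x : KA d) {z : KA d} (hz : revE d z = z) :
    EbarL d t (sh d (x - revE d x) z) = 0 := by
  rw [sh_eq_shBilin, map_sub, LinearMap.sub_apply, EbarL_sub, ← sh_eq_shBilin, ← sh_eq_shBilin,
    EbarL_sh_revE_left t x hz, sub_self]

lemma Qeps_eq_add_smul (m : ℕ) (ε : ℝ) :
    Qeps d m ε = Qeps d m 0 + ε • convPow d (idE d - nuE d) m := by
  simp [Qeps]

lemma remainder_Qeps_zero_single {m : ℕ} (hm : Even m) (t : ℝ) {u : Word d}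
    (hu : u.length = m) :
    ((idE d - EE d t) ∘ₗ Qeps d m 0) (single u 1) =
      (1 / 2 : ℝ) • (single u 1 - revE d (single u 1)) := by
  have hQ : Qeps d m 0 (single u 1) = (1 / 2 : ℝ) • (single u 1 - revE d (single u 1)) := by
    simp [Qeps, idE, Sa_single, hu, hm.neg_one_pow, revE_apply]
  have hE : EbarL d t (single u 1 - revE d (single u 1)) = 0 := by
    simp [revE_apply, Ebar_reverse]
  simp [hQ, EE_apply, idE, hE]

lemma remainder_convPow_J_single (t : ℝ) (v : Word d) :
    ((idE d - EE d t) ∘ₗ convPow d (idE d - nuE d) v.length) (single v 1) =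
      shuffleLetters v - single [] (EbarL d t (shuffleLetters v)) := by
  rw [LinearMap.comp_apply, convPow_J_single_of_length_eq, LinearMap.sub_apply, idE,
    LinearMap.id_apply, EE_apply]

lemma revE_shuffleLetters_sub_single_nil (t : ℝ) (v : Word d) :
    revE d (shuffleLetters v - single [] (EbarL d t (shuffleLetters v))) =
      shuffleLetters v - single [] (EbarL d t (shuffleLetters v)) := by
  rw [map_sub, revE_shuffleLetters, revE_apply (single _ _), mapDomain_single, List.reverse_nil]

lemma EbarL_sh_remainder_Qeps_zero_convPow_J {m : ℕ} (hm : Even m) (t : ℝ) {u v : Word d}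
    (hu : u.length = m) (hv : v.length = m) :
    EbarL d t (sh d (((idE d - EE d t) ∘ₗ Qeps d m 0) (single u 1))
      (((idE d - EE d t) ∘ₗ convPow d (idE d - nuE d) m) (single v 1))) = 0 := by
  rw [remainder_Qeps_zero_single hm t hu, ← hv, remainder_convPow_J_single, sh_eq_shBilin,
    map_smul, LinearMap.smul_apply, EbarL_smul, ← sh_eq_shBilin,
    EbarL_sh_sub_revE_left t _ (revE_shuffleLetters_sub_single_nil t v), mul_zero]

-- the indexing of words in `gramPSD`
def gramWord (m : ℕ) : Option (Fin m → Fin (d+1)) → Word d := fun o => o.elim [] List.ofFn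

lemma gramWord_injective {m : ℕ} (hm : 0 < m) : Function.Injective (gramWord (d := d) m) := by
  rintro (_ | x) (_ | y) h <;> simp_all [gramWord]

noncomputable def gramMatrix (d m : ℕ) (t : ℝ) :
    Matrix (Option (Fin m → Fin (d+1))) (Option (Fin m → Fin (d+1))) ℝ :=
  Matrix.of fun o p => EbarL d t (shuffleWord d (gramWord m o) (gramWord m p))

lemma gramPSD.posSemidef {m : ℕ} {t : ℝ} (h : gramPSD d m t) :
    (gramMatrix d m t).PosSemidef := by
  refine .of_dotProduct_mulVec_nonneg ?_ fun c => ?_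
  · ext o p
    simp [gramMatrix, shuffleWord_comm]
  · refine (h c).trans_eq ?_
    simp only [dotProduct, Matrix.mulVec, Pi.star_apply, star_trivial, Finset.mul_sum, gramMatrix,
      Matrix.of_apply, gramWord]
    exact Fintype.sum_congr _ _ fun o => Fintype.sum_congr _ _ fun p => by ring

lemma mem_range_gramWord {m : ℕ} {w : Word d} (hw : w = [] ∨ w.length = m) :
    w ∈ Set.range (gramWord m) := by
  rcases hw with rfl | rfl
  · exact ⟨none, rfl⟩
  · exact ⟨some w.get, List.ofFn_get w⟩

lemma support_remainder_convPow_J_subset {m : ℕ} (t : ℝ) {v : Word d} (hv : v.length = m) :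
    (↑(((idE d - EE d t) ∘ₗ convPow d (idE d - nuE d) m) (single v 1)).support : Set (Word d))
      ⊆ Set.range (gramWord m) := by
  subst hv
  rw [remainder_convPow_J_single]
  intro w hw
  apply mem_range_gramWord
  rcases Finset.mem_union.mp (support_sub hw) with h | h
  · exact Or.inr (length_of_mem_support_shuffleLetters h)
  · exact Or.inl (Finset.mem_singleton.mp (support_single_subset h))

variable {H : Type*} [NormedAddCommGroup H] [InnerProductSpace ℝ H]

lemma ip_add_smul_self (t : ℝ) (Vf : Word d → H) (n : ℕ) (X Y : KA d →ₗ[ℝ] KA d) (ε : ℝ) :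
    ip d t Vf n (X + ε • Y) (X + ε • Y) = ip d t Vf n X X + ε * ip d t Vf n X Y +
      ε * ip d t Vf n Y X + ε ^ 2 * ip d t Vf n Y Y := by
  simp only [ip, Finset.mul_sum, ← Finset.sum_add_distrib]
  refine Fintype.sum_congr _ _ fun u => Fintype.sum_congr _ _ fun v => ?_
  simp only [LinearMap.add_apply, LinearMap.smul_apply, sh_eq_shBilin, map_add, map_smul,
    LinearMap.add_apply, LinearMap.smul_apply, EbarL_add, EbarL_smul]
  ring

lemma ip_self_nonneg_of_gramPSD {m : ℕ} (hm : 0 < m) {t : ℝ} (hPSD : gramPSD d m t)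
    (Vf : Word d → H) (Y : KA d →ₗ[ℝ] KA d)
    (hY : ∀ u : Fin m → Fin (d+1),
      (↑(Y (single (List.ofFn u) 1)).support : Set (Word d)) ⊆ Set.range (gramWord m)) :
    0 ≤ ip d t Vf m Y Y := by
  set a : (Fin m → Fin (d+1)) → Option (Fin m → Fin (d+1)) → ℝ :=
    fun u o => Y (single (List.ofFn u) 1) (gramWord m o)
  set M := Matrix.of a * gramMatrix d m t * (Matrix.of a).conjTranspose with hM
  have hrepr (u : Fin m → Fin (d+1)) :
      Y (single (List.ofFn u) 1) = ∑ o, a u o • single (gramWord m o) 1 :=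
    Finsupp.eq_sum_single_of_support_subset_range (gramWord_injective hm) (hY u)
  have hEbar (u v : Fin m → Fin (d+1)) :
      EbarL d t (sh d (Y (single (List.ofFn u) 1)) (Y (single (List.ofFn v) 1))) = M u v := by
    rw [hrepr u, hrepr v]
    simp only [hM, sh_eq_shBilin, EbarL_eq_linearCombination, map_sum, map_smul, LinearMap.coe_sum,
      Finset.sum_apply, LinearMap.smul_apply, shBilin_single_single, one_mul, smul_eq_mul,
      Matrix.mul_apply, Matrix.conjTranspose_apply, Matrix.of_apply, star_trivial,
      Finset.sum_mul, Finset.mul_sum, gramMatrix]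
    exact Fintype.sum_congr _ _ fun p => Fintype.sum_congr _ _ fun o => by ring
  calc 0 ≤ ∑ u, ∑ v, M u v * inner ℝ (Vf (List.ofFn u)) (Vf (List.ofFn v)) :=
      sum_mul_inner_nonneg_of_posSemidef
        (hPSD.posSemidef.mul_mul_conjTranspose_same (Matrix.of a)) _
    _ = ip d t Vf m Y Y := by simp only [ip, hEbar]

end

theorem stmt_6_general (d m : ℕ) (hm : 2 ≤ m) (hme : Even m)
    (t : ℝ) (hPSD : gramPSD d m t)
    {H : Type*} [NormedAddCommGroup H] [InnerProductSpace ℝ H]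
    (Vf : Word d → H) (ε : ℝ) :
    ip d t Vf m ((idE d - EE d t) ∘ₗ Qeps d m ε) ((idE d - EE d t) ∘ₗ Qeps d m ε)
      ≥ ip d t Vf m ((idE d - EE d t) ∘ₗ Qeps d m 0)
                    ((idE d - EE d t) ∘ₗ Qeps d m 0) := by
  set X := (idE d - EE d t) ∘ₗ Qeps d m 0
  set Z := (idE d - EE d t) ∘ₗ convPow d (idE d - nuE d) m
  have hsplit : (idE d - EE d t) ∘ₗ Qeps d m ε = X + ε • Z := by
    rw [Qeps_eq_add_smul, LinearMap.comp_add, LinearMap.comp_smul]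
  have hcross (u v : Fin m → Fin (d+1)) :
      EbarL d t (sh d (X (single (List.ofFn u) 1)) (Z (single (List.ofFn v) 1))) = 0 :=
    EbarL_sh_remainder_Qeps_zero_convPow_J hme t List.length_ofFn List.length_ofFn
  have hXZ : ip d t Vf m X Z = 0 :=
    Finset.sum_eq_zero fun u _ => Finset.sum_eq_zero fun v _ => by rw [hcross, zero_mul]
  have hZX : ip d t Vf m Z X = 0 :=
    Finset.sum_eq_zero fun u _ => Finset.sum_eq_zero fun v _ => by rw [sh_comm, hcross, zero_mul]
  have hZZ : 0 ≤ ip d t Vf m Z Z :=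
    ip_self_nonneg_of_gramPSD (by omega) hPSD Vf Z fun _ =>
      support_remainder_convPow_J_subset t List.length_ofFn
  rw [hsplit, ip_add_smul_self, hXZ, hZX]
  linarith [mul_nonneg (sq_nonneg ε) hZZ]

theorem stmt_6 (d m : ℕ) (hd : 1 ≤ d) (hm : 2 ≤ m) (hme : Even m)
    (t : ℝ) (ht : 0 < t) (hPSD : gramPSD d m t)
    {H : Type*} [NormedAddCommGroup H] [InnerProductSpace ℝ H]
    (Vf : Word d → H) (ε : ℝ) :
    ip d t Vf m ((idE d - EE d t) ∘ₗ Qeps d m ε) ((idE d - EE d t) ∘ₗ Qeps d m ε)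
      ≥ ip d t Vf m ((idE d - EE d t) ∘ₗ Qeps d m 0)
                    ((idE d - EE d t) ∘ₗ Qeps d m 0) :=
  stmt_6_general d m hm hme t hPSD Vf ε
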